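/- Let G and H be finite groups and let X be a subgroup of G×H. Then X*X° = Δ(p₁(X))·(k₁(X)×{1}) = Δ(p₁(X))·({1}×k₁(X)); equivalently, X*X° equals the subgroup {(g,g') ∈ p₁(X)×p₁(X) : g·k₁(X) = g'·k₁(X)} of G×G. (Here Δ(p₁(X)) normalizes k₁(X)×{1} and {1}×k₁(X), so these products are subgroups.) -/

import Mathlib

open Pointwise

namespace Stmt0
/-- `k₁(X) = {g ∈ G ∣ (g,1) ∈ X}`. -/
def k1 {G H : Type*} [Group G] [Group H] (X : Subgroup (G × H)) : Subgroup G :=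
  X.comap (MonoidHom.inl G H)

/-- `k₂(X) = {h ∈ H ∣ (1,h) ∈ X}`. -/
def k2 {G H : Type*} [Group G] [Group H] (X : Subgroup (G × H)) : Subgroup H :=
  X.comap (MonoidHom.inr G H)

/-- `p₁(X)`, the image of `X` under the first projection. -/
def p1 {G H : Type*} [Group G] [Group H] (X : Subgroup (G × H)) : Subgroup G :=
  X.map (MonoidHom.fst G H)

/-- `p₂(X)`, the image of `X` under the second projection. -/
def p2 {G H : Type*} [Group G] [Group H] (X : Subgroup (G × H)) : Subgroup H :=
  X.map (MonoidHom.snd G H)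

/-- The opposite subgroup `X° = {(h,g) ∣ (g,h) ∈ X}`. -/
def opp {G H : Type*} [Group G] [Group H] (X : Subgroup (G × H)) : Subgroup (H × G) :=
  X.map ((MulEquiv.prodComm : (G × H) ≃* (H × G)).toMonoidHom)

/-- The composition `X*Y` of subgroup correspondences. -/
def comp {G H K : Type*} [Group G] [Group H] [Group K]
    (X : Subgroup (G × H)) (Y : Subgroup (H × K)) : Subgroup (G × K) where
  carrier := {gk | ∃ h : H, (gk.1, h) ∈ X ∧ (h, gk.2) ∈ Y}
  one_mem' := ⟨1, X.one_mem, Y.one_mem⟩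
  mul_mem' := by
    rintro ⟨g, k⟩ ⟨g', k'⟩ ⟨h, hX, hY⟩ ⟨h', hX', hY'⟩
    exact ⟨h * h', X.mul_mem hX hX', Y.mul_mem hY hY'⟩
  inv_mem' := by
    rintro ⟨g, k⟩ ⟨h, hX, hY⟩
    exact ⟨h⁻¹, X.inv_mem hX, Y.inv_mem hY⟩

lemma mem_comp {G H K : Type*} [Group G] [Group H] [Group K]
    {X : Subgroup (G × H)} {Y : Subgroup (H × K)} {x : G × K} :
    x ∈ comp X Y ↔ ∃ h : H, (x.1, h) ∈ X ∧ (h, x.2) ∈ Y := Iff.rfl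

lemma mem_opp {G H : Type*} [Group G] [Group H] {X : Subgroup (G × H)} {x : H × G} :
    x ∈ opp X ↔ (x.2, x.1) ∈ X := by
  rw [opp, Subgroup.mem_map]
  constructor
  · rintro ⟨⟨g, h⟩, hgh, rfl⟩
    simpa using hgh
  · intro hx
    exact ⟨(x.2, x.1), hx, rfl⟩

/-- The diagonal subgroup `Δ(P) = {(g,g) ∣ g ∈ P} ≤ G × G`. -/
def diag {G : Type*} [Group G] (P : Subgroup G) : Subgroup (G × G) :=
  (P.subtype.prod P.subtype).range

/-- The twisted diagonal subgroup `Δ(P,φ,Q) = {(φ y, y) ∣ y ∈ Q} ≤ G × H`. -/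
def tdiag {G H : Type*} [Group G] [Group H] (P : Subgroup G) (Q : Subgroup H)
    (φ : Q ≃* P) : Subgroup (G × H) :=
  ((P.subtype.comp φ.toMonoidHom).prod Q.subtype).range

/-! Two elements `(g, h), (g', h)` of `X` with the same second coordinate differ by
`(g⁻¹ * g', 1) ∈ X`, so `(g, g') ∈ X*X°` exactly when `g, g' ∈ p₁(X)` and `g⁻¹ * g' ∈ k₁(X)`.
Each of the three descriptions of `X*X°` is a rewriting of this membership criterion. -/

section

variable {G H : Type*} [Group G] [Group H]

lemma mem_comp_opp {X : Subgroup (G × H)} {g g' : G} :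
    (g, g') ∈ comp X (opp X) ↔ g ∈ p1 X ∧ g' ∈ p1 X ∧ g⁻¹ * g' ∈ k1 X := by
  constructor
  · rintro ⟨h, hg, hg'⟩
    rw [mem_opp] at hg'
    refine ⟨⟨(g, h), hg, rfl⟩, ⟨(g', h), hg', rfl⟩, ?_⟩
    simpa [k1] using X.mul_mem (X.inv_mem hg) hg'
  · rintro ⟨⟨⟨a, h⟩, ha, rfl⟩, -, hk⟩
    refine ⟨h, ha, mem_opp.2 ?_⟩
    simpa using X.mul_mem ha (show ((a⁻¹ * g', 1) : G × H) ∈ X from hk)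

lemma k1_le_p1 (X : Subgroup (G × H)) : k1 X ≤ p1 X :=
  fun k hk => ⟨(k, 1), hk, rfl⟩

lemma mem_diag {P : Subgroup G} {a b : G} : (a, b) ∈ diag P ↔ a ∈ P ∧ a = b := by
  rw [diag, MonoidHom.mem_range]
  constructor
  · rintro ⟨y, hy⟩
    obtain ⟨rfl, rfl⟩ := Prod.ext_iff.1 hy
    exact ⟨y.2, rfl⟩
  · rintro ⟨ha, rfl⟩
    exact ⟨⟨a, ha⟩, rfl⟩

lemma mem_diag_mul_prod_one {P K : Subgroup G} (hKP : K ≤ P) {g g' : G} :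
    (g, g') ∈ (diag P : Set (G × G)) * ((K : Set G) ×ˢ ({1} : Set G)) ↔
      g ∈ P ∧ g' ∈ P ∧ g⁻¹ * g' ∈ K := by
  simp only [Set.mem_mul, Set.mem_prod, Set.mem_singleton_iff, SetLike.mem_coe]
  constructor
  · rintro ⟨⟨a, b⟩, had, ⟨c, d⟩, ⟨hc, rfl⟩, hx⟩
    obtain ⟨ha, rfl⟩ := mem_diag.1 had
    obtain ⟨rfl, rfl⟩ : a * c = g ∧ a * 1 = g' := Prod.ext_iff.1 hx
    exact ⟨P.mul_mem ha (hKP hc), by simpa using ha, by simpa using K.inv_mem hc⟩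
  · rintro ⟨-, hg', hk⟩
    refine ⟨(g', g'), mem_diag.2 ⟨hg', rfl⟩, (g'⁻¹ * g, 1), ⟨?_, rfl⟩, by simp⟩
    simpa using K.inv_mem hk

lemma mem_diag_mul_one_prod {P K : Subgroup G} (hKP : K ≤ P) {g g' : G} :
    (g, g') ∈ (diag P : Set (G × G)) * (({1} : Set G) ×ˢ (K : Set G)) ↔
      g ∈ P ∧ g' ∈ P ∧ g⁻¹ * g' ∈ K := by
  simp only [Set.mem_mul, Set.mem_prod, Set.mem_singleton_iff, SetLike.mem_coe]
  constructor
  · rintro ⟨⟨a, b⟩, had, ⟨c, d⟩, ⟨rfl, hd⟩, hx⟩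
    obtain ⟨ha, rfl⟩ := mem_diag.1 had
    obtain ⟨rfl, rfl⟩ : a * 1 = g ∧ a * d = g' := Prod.ext_iff.1 hx
    exact ⟨by simpa using ha, P.mul_mem ha (hKP hd), by simpa using hd⟩
  · rintro ⟨hg, -, hk⟩
    exact ⟨(g, g), mem_diag.2 ⟨hg, rfl⟩, (1, g⁻¹ * g'), ⟨rfl, hk⟩, by simp⟩

end

theorem stmt0_general {G H : Type*} [Group G] [Group H]
    (X : Subgroup (G × H)) :
    ((comp X (opp X) : Subgroup (G × G)) : Set (G × G)) =
        (diag (p1 X) : Set (G × G)) * ((k1 X : Set G) ×ˢ ({1} : Set G)) ∧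
      ((comp X (opp X) : Subgroup (G × G)) : Set (G × G)) =
        (diag (p1 X) : Set (G × G)) * (({1} : Set G) ×ˢ (k1 X : Set G)) ∧
      ∀ g g' : G, ((g, g') ∈ comp X (opp X) ↔
        g ∈ p1 X ∧ g' ∈ p1 X ∧ g • (k1 X : Set G) = g' • (k1 X : Set G)) := by
  refine ⟨?_, ?_, fun g g' => by rw [mem_comp_opp, leftCoset_eq_iff]⟩
  · ext ⟨g, g'⟩
    rw [mem_diag_mul_prod_one (k1_le_p1 X), SetLike.mem_coe, mem_comp_opp]
  · ext ⟨g, g'⟩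
    rw [mem_diag_mul_one_prod (k1_le_p1 X), SetLike.mem_coe, mem_comp_opp]

/-- For a subgroup `X ≤ G × H` of a product of finite groups one has
`X*X° = Δ(p₁(X))·(k₁(X)×{1}) = Δ(p₁(X))·({1}×k₁(X))`; equivalently, `X*X°` is the set of
pairs `(g,g') ∈ p₁(X)×p₁(X)` with `g·k₁(X) = g'·k₁(X)`. -/
theorem stmt0 {G H : Type*} [Group G] [Group H] [Finite G] [Finite H]
    (X : Subgroup (G × H)) :
    ((comp X (opp X) : Subgroup (G × G)) : Set (G × G)) =
        (diag (p1 X) : Set (G × G)) * ((k1 X : Set G) ×ˢ ({1} : Set G)) ∧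
      ((comp X (opp X) : Subgroup (G × G)) : Set (G × G)) =
        (diag (p1 X) : Set (G × G)) * (({1} : Set G) ×ˢ (k1 X : Set G)) ∧
      ∀ g g' : G, ((g, g') ∈ comp X (opp X) ↔
        g ∈ p1 X ∧ g' ∈ p1 X ∧ g • (k1 X : Set G) = g' • (k1 X : Set G)) :=
  stmt0_general X

end Stmt0
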